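/- Let d ≥ 2 and M ≥ 1. For ξ ∈ {0,1}^{ℤ^d}, define the renormalized configuration ξ̃ ∈ {0,1}^{ℤ^d} by ξ̃(x) = 1 if and only if the restriction of ξ to B(Mx, M) has a unique open cluster of ℓ∞-diameter at least M, and this cluster intersects every face of B(Mx, M). If ξ̃ ∈ Perc, then ξ ∈ Perc. -/
import Mathlib


/-!
STATEMENT 12: Let `d ≥ 2` and `M ≥ 1`. For `ξ ∈ {0,1}^(ℤ^d)` define the renormalized
configuration `ξ̃` by: `ξ̃(x) = 1` iff the restriction of `ξ` to `B(Mx, M)` has a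
unique open cluster of `ℓ∞`-diameter at least `M` and this cluster intersects every
face of `B(Mx, M)`. If `ξ̃ ∈ Perc`, then `ξ ∈ Perc`.

Configurations are modelled as `(Fin d → ℤ) → Bool` (`true` = `1` = open); the
renormalized configuration is any `ξt : (Fin d → ℤ) → Bool` satisfying the defining
equivalence. `Perc` is the event that there is an infinite (injective)
nearest-neighbor path of open sites.
-/

/-- The `ℓ∞` norm of a point of `ℤ^d`, as a natural number. -/
def normInf {d : ℕ} (x : Fin d → ℤ) : ℕ := Finset.univ.sup fun i => (x i).natAbs

/-- The `ℓ¹` norm of a point of `ℤ^d`, as a natural number. -/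
def norm1 {d : ℕ} (x : Fin d → ℤ) : ℕ := ∑ i, (x i).natAbs

/-- The `ℓ∞`-ball `B(x, r)` in `ℤ^d`. -/
def box {d : ℕ} (x : Fin d → ℤ) (r : ℕ) : Set (Fin d → ℤ) := {y | normInf (y - x) ≤ r}

/-- `x` and `y` are connected by a nearest-neighbor path of open sites staying in `S`. -/
def openConnIn (d : ℕ) (S : Set (Fin d → ℤ)) (ξ : (Fin d → ℤ) → Bool)
    (x y : Fin d → ℤ) : Prop :=
  ∃ (n : ℕ) (γ : ℕ → (Fin d → ℤ)), γ 0 = x ∧ γ n = y ∧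
    (∀ i ≤ n, γ i ∈ S ∧ ξ (γ i) = true) ∧
    ∀ i < n, norm1 (γ (i + 1) - γ i) = 1

/-- `C` is an open cluster of `ξ` restricted to `S`. -/
def IsOpenClusterIn (d : ℕ) (S : Set (Fin d → ℤ)) (ξ : (Fin d → ℤ) → Bool)
    (C : Set (Fin d → ℤ)) : Prop :=
  ∃ x ∈ S, ξ x = true ∧ C = {y | openConnIn d S ξ x y}

/-- The set `C` has `ℓ∞`-diameter at least `M`. -/
def DiamGE {d : ℕ} (M : ℕ) (C : Set (Fin d → ℤ)) : Prop :=
  ∃ u ∈ C, ∃ v ∈ C, M ≤ normInf (u - v)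

/-- `C` intersects every face of the box `B(z, M)`. -/
def HitsAllFaces {d : ℕ} (z : Fin d → ℤ) (M : ℕ) (C : Set (Fin d → ℤ)) : Prop :=
  ∀ j : Fin d, ∀ ε : ℤ, (ε = 1 ∨ ε = -1) → ∃ w ∈ C, w j - z j = ε * M

/-- The event defining `ξ̃(x) = 1`: the restriction of `ξ` to `B(z, M)` has a unique
open cluster of diameter `≥ M`, and this cluster intersects all faces of `B(z, M)`. -/
def SpecialEvent (d : ℕ) (z : Fin d → ℤ) (M : ℕ) (ξ : (Fin d → ℤ) → Bool) : Prop :=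
  ∃ C : Set (Fin d → ℤ),
    IsOpenClusterIn d (box z M) ξ C ∧ DiamGE M C ∧ HitsAllFaces z M C ∧
    ∀ C' : Set (Fin d → ℤ),
      IsOpenClusterIn d (box z M) ξ C' → DiamGE M C' → C' = C

/-- `Perc`: the set of configurations containing an infinite nearest-neighbor path
(with pairwise distinct vertices) of open sites. -/
def Perc (d : ℕ) : Set ((Fin d → ℤ) → Bool) :=
  {ξ | ∃ γ : ℕ → (Fin d → ℤ), Function.Injective γ ∧
    (∀ i, norm1 (γ (i + 1) - γ i) = 1) ∧ ∀ i, ξ (γ i) = true}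

section Aux

variable {d : ℕ}

lemma natAbs_coord_le_normInf (x : Fin d → ℤ) (j : Fin d) :
    (x j).natAbs ≤ normInf x := by
  unfold normInf; exact Finset.le_sup (f := fun i => (x i).natAbs) (Finset.mem_univ j)

lemma normInf_le {x : Fin d → ℤ} {K : ℕ} (h : ∀ j, (x j).natAbs ≤ K) :
    normInf x ≤ K := Finset.sup_le fun j _ => h j

lemma natAbs_coord_le_norm1 (x : Fin d → ℤ) (j : Fin d) :
    (x j).natAbs ≤ norm1 x := by
  unfold norm1; exact Finset.single_le_sum (f := fun i => (x i).natAbs) (fun i _ => Nat.zero_le _) (Finset.mem_univ j)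

lemma normInf_add_le (x y : Fin d → ℤ) :
    normInf (x + y) ≤ normInf x + normInf y := by
  refine normInf_le fun j => ?_
  show (x j + y j).natAbs ≤ _
  exact le_trans (Int.natAbs_add_le _ _)
    (Nat.add_le_add (natAbs_coord_le_normInf x j) (natAbs_coord_le_normInf y j))

lemma normInf_sub_le (x y z : Fin d → ℤ) :
    normInf (x - z) ≤ normInf (x - y) + normInf (y - z) := by
  have : x - z = (x - y) + (y - z) := by abel
  rw [this]; exact normInf_add_le _ _

lemma normInf_le_sub_add {d : ℕ} (a b : Fin d → ℤ) :
    normInf a ≤ normInf (a - b) + normInf b := by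
  have h := normInf_add_le (a - b) b
  rwa [sub_add_cancel] at h

lemma normInf_sub_comm (x y : Fin d → ℤ) :
    normInf (x - y) = normInf (y - x) := by
  unfold normInf
  congr 1; funext j
  show (x j - y j).natAbs = (y j - x j).natAbs
  omega

lemma norm1_sub_comm {d : ℕ} (x y : Fin d → ℤ) : norm1 (x - y) = norm1 (y - x) := by
  unfold norm1
  congr 1; funext j
  show (x j - y j).natAbs = (y j - x j).natAbs
  omega

lemma normInf_le_norm1 (x : Fin d → ℤ) : normInf x ≤ norm1 x :=
  normInf_le fun j => natAbs_coord_le_norm1 x j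

lemma normInf_self_sub (x : Fin d → ℤ) : normInf (x - x) = 0 :=
  Nat.le_antisymm (normInf_le fun j => by show (x j - x j).natAbs ≤ 0; omega) (Nat.zero_le _)

lemma finite_box (c : Fin d → ℤ) (K : ℕ) :
    {y : Fin d → ℤ | normInf (y - c) ≤ K}.Finite := by
  have hsub : {y : Fin d → ℤ | normInf (y - c) ≤ K} ⊆
      Set.pi Set.univ (fun j => Set.Icc (c j - (K : ℤ)) (c j + K)) := by
    intro y hy j _
    have h1 : (y j - c j).natAbs ≤ K := le_trans (natAbs_coord_le_normInf (y - c) j) hy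
    simp only [Set.mem_Icc]
    omega
  exact (Set.Finite.pi fun j => Set.finite_Icc _ _).subset hsub

lemma norm1_eq_one {v : Fin d → ℤ} (h : norm1 v = 1) :
    ∃ (j : Fin d) (ε : ℤ), (ε = 1 ∨ ε = -1) ∧ v j = ε ∧ ∀ i, i ≠ j → v i = 0 := by
  have hne : ∃ j ∈ Finset.univ, (v j).natAbs ≠ 0 := by
    by_contra hc
    push_neg at hc
    have : norm1 v = 0 := Finset.sum_eq_zero fun i hi => hc i hi
    omega
  obtain ⟨j, -, hj⟩ := hne
  have hle : (v j).natAbs ≤ 1 := h ▸ natAbs_coord_le_norm1 v j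
  have hj1 : (v j).natAbs = 1 := by omega
  refine ⟨j, v j, ?_, rfl, fun i hi => ?_⟩
  · omega
  · have hpair : (v i).natAbs + (v j).natAbs ≤ norm1 v := by
      have : ({i, j} : Finset (Fin d)).sum (fun k => (v k).natAbs) ≤ norm1 v :=
        Finset.sum_le_sum_of_subset (Finset.subset_univ _)
      rwa [Finset.sum_pair hi] at this
    omega

end Aux
section Conn

variable {d : ℕ} {S : Set (Fin d → ℤ)} {ξ : (Fin d → ℤ) → Bool}

lemma openConnIn_refl {x : Fin d → ℤ} (hx : x ∈ S) (hξ : ξ x = true) :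
    openConnIn d S ξ x x :=
  ⟨0, fun _ => x, rfl, rfl, fun _ _ => ⟨hx, hξ⟩, fun i hi => absurd hi (Nat.not_lt_zero i)⟩

lemma openConnIn_symm {x y : Fin d → ℤ} (h : openConnIn d S ξ x y) :
    openConnIn d S ξ y x := by
  obtain ⟨n, γ, h0, hn, hmem, hstep⟩ := h
  refine ⟨n, fun i => γ (n - i), by simpa using hn, by simpa using h0,
    fun i hi => hmem _ (Nat.sub_le _ _), fun i hi => ?_⟩
  have h1 : n - i = (n - (i + 1)) + 1 := by omega
  have h2 : n - (i + 1) < n := by omega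
  show norm1 (γ (n - (i+1)) - γ (n - i)) = 1
  rw [h1, norm1_sub_comm]
  exact hstep _ h2

lemma openConnIn_trans {x y z : Fin d → ℤ} (h1 : openConnIn d S ξ x y)
    (h2 : openConnIn d S ξ y z) : openConnIn d S ξ x z := by
  obtain ⟨n, γ, h0, hn, hmem, hstep⟩ := h1
  obtain ⟨m, δ, g0, gm, gmem, gstep⟩ := h2
  refine ⟨n + m, fun i => if i ≤ n then γ i else δ (i - n), by simp [h0], ?_, ?_, ?_⟩
  · by_cases hm : m = 0
    · subst hm; simp [hn, ← gm, ← g0]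
    · have : ¬ (n + m ≤ n) := by omega
      simp only [this, if_false]
      rw [show n + m - n = m by omega, gm]
  · intro i hi
    by_cases hin : i ≤ n
    · simp only [hin, if_true]; exact hmem i hin
    · simp only [hin, if_false]; exact gmem _ (by omega)
  · intro i hi
    by_cases hin : i + 1 ≤ n
    · simp only [hin, show i ≤ n by omega, if_true]; exact hstep i (by omega)
    · have hdi : (if i ≤ n then γ i else δ (i - n)) = δ (i - n) := by
        by_cases hii : i ≤ n
        · have : i = n := by omega
          subst this
          simp [hn, ← g0]
        · simp [hii]
      simp only [hin, if_false, hdi]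
      rw [show i + 1 - n = (i - n) + 1 by omega]
      exact gstep _ (by omega)

lemma openConnIn_mem_right {x y : Fin d → ℤ} (h : openConnIn d S ξ x y) :
    y ∈ S ∧ ξ y = true := by
  obtain ⟨n, γ, h0, hn, hmem, hstep⟩ := h
  have := hmem n le_rfl
  rwa [hn] at this

lemma openConnIn_normInf_le {x y : Fin d → ℤ} (h : openConnIn d S ξ x y) :
    ∃ (n : ℕ) (γ : ℕ → (Fin d → ℤ)), γ 0 = x ∧ γ n = y ∧
      (∀ i ≤ n, γ i ∈ S ∧ ξ (γ i) = true) ∧ (∀ i < n, norm1 (γ (i + 1) - γ i) = 1) ∧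
      normInf (y - x) ≤ n := by
  obtain ⟨n, γ, h0, hn, hmem, hstep⟩ := h
  refine ⟨n, γ, h0, hn, hmem, hstep, ?_⟩
  have key : ∀ k ≤ n, normInf (γ k - x) ≤ k := by
    intro k
    induction k with
    | zero => intro _; rw [h0, normInf_self_sub]
    | succ k ih =>
      intro hk
      calc normInf (γ (k+1) - x) ≤ normInf (γ (k+1) - γ k) + normInf (γ k - x) :=
            normInf_sub_le _ _ _
        _ ≤ 1 + k := Nat.add_le_add (le_trans (normInf_le_norm1 _) (le_of_eq (hstep k (by omega))))
            (ih (by omega))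
        _ = k + 1 := by omega
  rw [← hn]; exact key n le_rfl

end Conn
section Glue

lemma last_zero_crossing (f : ℕ → ℤ) (n M : ℕ) (hM : 1 ≤ M)
    (h0 : f 0 = -(M : ℤ)) (hn : f n = M)
    (hstep : ∀ k < n, (f (k + 1) - f k).natAbs ≤ 1) :
    ∃ k ≤ n, f k = 0 ∧ ∀ m, k ≤ m → m ≤ n → 0 ≤ f m := by
  classical
  set s : Finset ℕ := (Finset.range (n + 1)).filter (fun k => f k ≤ 0) with hs
  have h0s : 0 ∈ s := by
    simp only [hs, Finset.mem_filter, Finset.mem_range]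
    constructor
    · omega
    · rw [h0]; omega
  have hne : s.Nonempty := ⟨0, h0s⟩
  set k := s.max' hne with hk
  have hks : k ∈ s := s.max'_mem hne
  have hkn : k ≤ n := by
    have := hks; simp only [hs, Finset.mem_filter, Finset.mem_range] at this; omega
  have hfk : f k ≤ 0 := by
    have := hks; simp only [hs, Finset.mem_filter, Finset.mem_range] at this; exact this.2
  have hknn : k ≠ n := by
    intro hcon; rw [hcon, hn] at hfk; omega
  have hklt : k < n := lt_of_le_of_ne hkn hknn
  have hnotmem : ∀ m, k < m → m ≤ n → 0 < f m := by
    intro m hm1 hm2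
    by_contra hc
    push_neg at hc
    have : m ∈ s := by
      simp only [hs, Finset.mem_filter, Finset.mem_range]; exact ⟨by omega, hc⟩
    have := s.le_max' m this
    omega
  have hfk1 : 0 < f (k + 1) := hnotmem (k + 1) (by omega) (by omega)
  have := hstep k hklt
  have hfk0 : f k = 0 := by omega
  exact ⟨k, hkn, hfk0, fun m hm1 hm2 => by
    rcases Nat.eq_or_lt_of_le hm1 with h | h
    · rw [← h, hfk0]
    · exact le_of_lt (hnotmem m h hm2)⟩

lemma glue {d M : ℕ} (hM : 1 ≤ M) (ξ : (Fin d → ℤ) → Bool) (x y : Fin d → ℤ)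
    (hxy : norm1 (y - x) = 1) (Cx : Set (Fin d → ℤ))
    (hCx : IsOpenClusterIn d (box (fun j => (M : ℤ) * x j) M) ξ Cx)
    (hFx : HitsAllFaces (fun j => (M : ℤ) * x j) M Cx) :
    ∃ w ∈ Cx, ∃ C' : Set (Fin d → ℤ),
      IsOpenClusterIn d (box (fun j => (M : ℤ) * y j) M) ξ C' ∧ DiamGE M C' ∧ w ∈ C' := by
  classical
  set zx : Fin d → ℤ := fun j => (M : ℤ) * x j with hzx
  set zy : Fin d → ℤ := fun j => (M : ℤ) * y j with hzy
  obtain ⟨j, ε, hε, hvj, hvi⟩ := norm1_eq_one hxy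
  have hεsq : ε * ε = 1 := by rcases hε with h | h <;> simp [h]
  have hyj : y j = x j + ε := by
    have : (y - x) j = y j - x j := rfl
    rw [this] at hvj; omega
  have hyi : ∀ i, i ≠ j → y i = x i := by
    intro i hi
    have : (y - x) i = y i - x i := rfl
    have := hvi i hi
    rw [show (y - x) i = y i - x i from rfl] at this
    omega
  -- the two face points
  obtain ⟨wp, hwp, hwpj⟩ := hFx j ε hε
  have hεneg : (-ε = 1 ∨ -ε = -1) := by rcases hε with h | h <;> simp [h]
  obtain ⟨wm, hwm, hwmj⟩ := hFx j (-ε) hεneg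
  -- path from wm to wp inside box zx M
  obtain ⟨a, ha, haop, hCeq⟩ := hCx
  have hconn : openConnIn d (box zx M) ξ wm wp := by
    have h1 : openConnIn d (box zx M) ξ a wm := by rw [hCeq] at hwm; exact hwm
    have h2 : openConnIn d (box zx M) ξ a wp := by rw [hCeq] at hwp; exact hwp
    exact openConnIn_trans (openConnIn_symm h1) h2
  obtain ⟨n, π, hπ0, hπn, hπmem, hπstep⟩ := hconn
  -- the crossing function
  set f : ℕ → ℤ := fun m => ε * (π m j - zx j) with hf
  have hf0 : f 0 = -(M : ℤ) := by
    simp only [hf, hπ0]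
    rw [show wm j - zx j = -ε * M from hwmj]
    rcases hε with h | h <;> (rw [h]; ring)
  have hfn : f n = M := by
    simp only [hf, hπn]
    rw [hwpj]
    rcases hε with h | h <;> (rw [h]; ring)
  have hfstep : ∀ k < n, (f (k + 1) - f k).natAbs ≤ 1 := by
    intro k hk
    have h1 : f (k + 1) - f k = ε * ((π (k + 1) - π k) j) := by
      simp only [hf]
      show ε * (π (k+1) j - zx j) - ε * (π k j - zx j) = ε * (π (k+1) j - π k j)
      ring
    rw [h1, Int.natAbs_mul]
    have hε1 : ε.natAbs = 1 := by rcases hε with h | h <;> simp [h]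
    rw [hε1, one_mul]
    exact le_trans (natAbs_coord_le_norm1 _ j) (le_of_eq (hπstep k hk))
  obtain ⟨k, hkn, hfk0, hfpos⟩ := last_zero_crossing f n M hM hf0 hfn hfstep
  -- coordinate values of f
  have hfval : ∀ m, π m j - zx j = ε * f m := by
    intro m
    simp only [hf]
    rw [show ε * (ε * (π m j - zx j)) = (ε * ε) * (π m j - zx j) by ring, hεsq, one_mul]
  have hfbound : ∀ m ≤ n, (f m).natAbs ≤ M := by
    intro m hm
    have hbox := (hπmem m hm).1
    have : ((π m - zx) j).natAbs ≤ M := le_trans (natAbs_coord_le_normInf _ j) hbox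
    rw [show (π m - zx) j = π m j - zx j from rfl, hfval m, Int.natAbs_mul] at this
    have hε1 : ε.natAbs = 1 := by rcases hε with h | h <;> simp [h]
    rwa [hε1, one_mul] at this
  -- the shifted path σ
  set N := n - k with hN
  set σ : ℕ → (Fin d → ℤ) := fun m => π (k + m) with hσ
  have hmemy : ∀ m ≤ N, σ m ∈ box zy M ∧ ξ (σ m) = true := by
    intro m hm
    have hkm : k + m ≤ n := by omega
    refine ⟨?_, (hπmem _ hkm).2⟩
    show normInf (σ m - zy) ≤ M
    refine normInf_le fun i => ?_
    show (σ m i - zy i).natAbs ≤ M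
    by_cases hij : i = j
    · subst hij
      have h1 : σ m i - zy i = π (k + m) i - zx i - ε * M := by
        simp only [hσ, hzy, hzx]
        rw [hyj]; ring
      have h2 : π (k + m) i - zx i = ε * f (k + m) := hfval _
      have h3 : 0 ≤ f (k + m) := hfpos _ (by omega) hkm
      have h4 : (f (k + m)).natAbs ≤ M := hfbound _ hkm
      rw [h1, h2]
      have : ε * f (k + m) - ε * M = ε * (f (k + m) - M) := by ring
      rw [this, Int.natAbs_mul]
      have hε1 : ε.natAbs = 1 := by rcases hε with h | h <;> simp [h]
      rw [hε1, one_mul]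
      omega
    · have h1 : zy i = zx i := by
        simp only [hzy, hzx]
        rw [hyi i hij]
      rw [h1]
      have hbox := (hπmem _ hkm).1
      exact le_trans (natAbs_coord_le_normInf (π (k+m) - zx) i) hbox
  have hstepy : ∀ m < N, norm1 (σ (m + 1) - σ m) = 1 := by
    intro m hm
    show norm1 (π (k + (m + 1)) - π (k + m)) = 1
    rw [show k + (m + 1) = (k + m) + 1 by omega]
    exact hπstep _ (by omega)
  have hσ0 : σ 0 = π k := by simp [hσ]
  have hσN : σ N = wp := by
    simp only [hσ, hN]
    rw [show k + (n - k) = n by omega, hπn]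
  -- the cluster C'
  set C' : Set (Fin d → ℤ) := {v | openConnIn d (box zy M) ξ (σ 0) v} with hC'
  have hσ0mem := hmemy 0 (Nat.zero_le _)
  have hwpC' : wp ∈ C' := ⟨N, σ, rfl, hσN, hmemy, hstepy⟩
  have hσ0C' : σ 0 ∈ C' := openConnIn_refl hσ0mem.1 hσ0mem.2
  have hdiam : DiamGE M C' := by
    refine ⟨wp, hwpC', σ 0, hσ0C', ?_⟩
    have h1 : wp j - σ 0 j = ε * M := by
      have e1 : π k j - zx j = ε * f k := hfval k
      rw [hfk0, mul_zero] at e1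
      have : σ 0 j = π k j := by rw [hσ0]
      rw [this]
      omega
    have h2 : ((wp - σ 0) j).natAbs = M := by
      rw [show (wp - σ 0) j = wp j - σ 0 j from rfl, h1, Int.natAbs_mul]
      have hε1 : ε.natAbs = 1 := by rcases hε with h | h <;> simp [h]
      rw [hε1, one_mul, Int.natAbs_natCast]
    calc M = ((wp - σ 0) j).natAbs := h2.symm
      _ ≤ normInf (wp - σ 0) := natAbs_coord_le_normInf _ j
  exact ⟨wp, hwp, C', ⟨σ 0, hσ0mem.1, hσ0mem.2, rfl⟩, hdiam, hwpC'⟩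

end Glue
section LoopErase

lemma perc_of_walk {d : ℕ} (ξ : (Fin d → ℤ) → Bool) (W : ℕ → Fin d → ℤ)
    (hstep : ∀ m, norm1 (W (m + 1) - W m) = 1)
    (hopen : ∀ m, ξ (W m) = true)
    (hfin : ∀ m, {k | W k = W m}.Finite) :
    ξ ∈ Perc d := by
  classical
  -- L m : the last time the walk is at W m
  set L : ℕ → ℕ := fun m => ((hfin m).toFinset.max' ⟨m, by simp⟩) with hL
  have hLmem : ∀ m, W (L m) = W m := by
    intro m
    have := (hfin m).toFinset.max'_mem ⟨m, by simp⟩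
    simpa using this
  have hLle : ∀ m k, W k = W m → k ≤ L m := by
    intro m k hk
    exact (hfin m).toFinset.le_max' k (by simpa using hk)
  have hLcongr : ∀ m k, W k = W m → L k = L m := by
    intro m k hk
    have h1 : L k ≤ L m := hLle m (L k) (by rw [hLmem k, hk])
    have h2 : L m ≤ L k := hLle k (L m) (by rw [hLmem m, hk])
    omega
  have hLfix : ∀ m, L (L m) = L m := fun m => hLcongr m (L m) (hLmem m)
  have hLge : ∀ m, m ≤ L m := fun m => hLle m m rfl
  -- the times of the loop-erased path
  set T : ℕ → ℕ := fun k => Nat.rec (L 0) (fun _ t => L (t + 1)) k with hT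
  have hT0 : T 0 = L 0 := rfl
  have hTsucc : ∀ k, T (k + 1) = L (T k + 1) := fun k => rfl
  have hTfix : ∀ k, L (T k) = T k := by
    intro k
    cases k with
    | zero => exact hLfix 0
    | succ k => exact hLfix _
  have hTmono : StrictMono T := by
    apply strictMono_nat_of_lt_succ
    intro k
    have : T k + 1 ≤ L (T k + 1) := hLge _
    rw [hTsucc]; omega
  refine ⟨fun k => W (T k), ?_, ?_, fun k => hopen _⟩
  · intro k l hkl
    have h1 : L (T k) = L (T l) := hLcongr (T l) (T k) hkl
    rw [hTfix, hTfix] at h1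
    exact hTmono.injective h1
  · intro k
    show norm1 (W (T (k + 1)) - W (T k)) = 1
    rw [hTsucc, hLmem (T k + 1)]
    exact hstep (T k)

end LoopErase
theorem perc_of_renormalized_perc (d M : ℕ) (hd : 2 ≤ d) (hM : 1 ≤ M)
    (ξ ξt : (Fin d → ℤ) → Bool)
    (hdef : ∀ x : Fin d → ℤ,
      ξt x = true ↔ SpecialEvent d (fun j => (M : ℤ) * x j) M ξ)
    (h : ξt ∈ Perc d) :
    ξ ∈ Perc d := by
  classical
  obtain ⟨γt, hinj, hstepT, hopenT⟩ := h
  have SE' : ∀ i : ℕ, ∃ C : Set (Fin d → ℤ),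
      IsOpenClusterIn d (box (fun j => (M : ℤ) * γt i j) M) ξ C ∧ DiamGE M C ∧
      HitsAllFaces (fun j => (M : ℤ) * γt i j) M C ∧
      ∀ C', IsOpenClusterIn d (box (fun j => (M : ℤ) * γt i j) M) ξ C' →
        DiamGE M C' → C' = C :=
    fun i => (hdef (γt i)).1 (hopenT i)
  choose C hclus hdiam hface huniq using SE'
  -- gluing successive clusters
  have key : ∀ i, ∃ w, w ∈ C i ∧ w ∈ C (i + 1) := by
    intro i
    obtain ⟨w, hw, C', hC'c, hC'd, hwC'⟩ :=
      glue hM ξ (γt i) (γt (i + 1)) (hstepT i) (C i) (hclus i) (hface i)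
    exact ⟨w, hw, (huniq (i + 1) C' hC'c hC'd) ▸ hwC'⟩
  choose u hu1 hu2 using key
  -- connecting paths between consecutive u's
  have conn : ∀ i, ∃ (n : ℕ) (π : ℕ → Fin d → ℤ), π 0 = u i ∧ π n = u (i + 1) ∧
      (∀ k ≤ n, π k ∈ box (fun j => (M : ℤ) * γt (i + 1) j) M ∧ ξ (π k) = true) ∧
      (∀ k < n, norm1 (π (k + 1) - π k) = 1) ∧ normInf (u (i + 1) - u i) ≤ n := by
    intro i
    obtain ⟨a, ha, hao, hCeq⟩ := hclus (i + 1)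
    have h1 := hu2 i
    have h2 := hu1 (i + 1)
    rw [hCeq] at h1 h2
    exact openConnIn_normInf_le (openConnIn_trans (openConnIn_symm h1) h2)
  choose n π hπ0 hπn hπmem hπstep hπlen using conn
  -- u i lies in its own box
  have ubox : ∀ i, normInf (u i - (fun j => (M : ℤ) * γt i j)) ≤ M := by
    intro i
    obtain ⟨a, ha, hao, hCeq⟩ := hclus i
    have h1 := hu1 i
    rw [hCeq] at h1
    exact (openConnIn_mem_right h1).1
  -- cumulative sums
  set S : ℕ → ℕ := fun i => ∑ k ∈ Finset.range i, n k with hS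
  have hSsucc : ∀ i, S (i + 1) = S i + n i := fun i => Finset.sum_range_succ _ _
  have hSmono : Monotone S := fun a b hab =>
    Finset.sum_le_sum_of_subset (Finset.range_subset_range.2 hab)
  have hS0 : S 0 = 0 := rfl
  -- displacement bound
  have udist : ∀ i, normInf (u i - u 0) ≤ S i := by
    intro i
    induction i with
    | zero => rw [normInf_self_sub]; exact Nat.zero_le _
    | succ i ih =>
      calc normInf (u (i + 1) - u 0)
          ≤ normInf (u (i + 1) - u i) + normInf (u i - u 0) := normInf_sub_le _ _ _
        _ ≤ n i + S i := Nat.add_le_add (hπlen i) ih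
        _ = S (i + 1) := by rw [hSsucc]; omega
  -- S is unbounded
  have hbig : ∀ B : ℕ, ∃ i, B < normInf (γt i) := by
    intro B
    by_contra hc
    push_neg at hc
    have hsub : Set.range γt ⊆ {y : Fin d → ℤ | normInf (y - 0) ≤ B} := by
      rintro _ ⟨i, rfl⟩
      show normInf (γt i - 0) ≤ B
      rw [sub_zero]
      exact hc i
    exact (Set.infinite_range_of_injective hinj) ((finite_box (0 : Fin d → ℤ) B).subset hsub)
  have hSub : ∀ K : ℕ, ∃ i, K < S i := by
    intro K
    obtain ⟨i, hi⟩ := hbig (K + M + normInf (u 0))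
    refine ⟨i, ?_⟩
    have h1 : normInf (γt i) ≤ normInf (fun j => (M : ℤ) * γt i j) := by
      refine normInf_le fun j => ?_
      calc (γt i j).natAbs ≤ M * (γt i j).natAbs := Nat.le_mul_of_pos_left _ (by omega)
        _ = ((M : ℤ) * γt i j).natAbs := by rw [Int.natAbs_mul, Int.natAbs_natCast]
        _ ≤ _ := natAbs_coord_le_normInf (fun j => (M : ℤ) * γt i j) j
    have h2 : normInf (fun j => (M : ℤ) * γt i j) ≤
        normInf ((fun j => (M : ℤ) * γt i j) - u i) + normInf (u i) :=
      normInf_le_sub_add _ _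
    have h3 : normInf ((fun j => (M : ℤ) * γt i j) - u i) ≤ M := by
      rw [normInf_sub_comm]
      exact ubox i
    have h4 : normInf (u i) ≤ normInf (u i - u 0) + normInf (u 0) := normInf_le_sub_add _ _
    have h5 := udist i
    omega
  -- the walk
  have ex : ∀ m : ℕ, ∃ i, m < S (i + 1) := by
    intro m
    obtain ⟨i, hi⟩ := hSub m
    exact ⟨i, lt_of_lt_of_le hi (hSmono (Nat.le_succ i))⟩
  set I : ℕ → ℕ := fun m => Nat.find (ex m) with hI
  have hI1 : ∀ m, m < S (I m + 1) := fun m => Nat.find_spec (ex m)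
  have hI2 : ∀ m, S (I m) ≤ m := by
    intro m
    rcases Nat.eq_zero_or_pos (I m) with h | h
    · rw [h, hS0]; omega
    · have hmin := Nat.find_min (ex m) (show I m - 1 < I m by omega)
      push_neg at hmin
      calc S (I m) = S ((I m - 1) + 1) := by congr 1; omega
        _ ≤ m := hmin
  set W : ℕ → Fin d → ℤ := fun m => π (I m) (m - S (I m)) with hW
  have hoff : ∀ m, m - S (I m) < n (I m) := by
    intro m
    have h1 := hI1 m
    have h2 := hI2 m
    rw [hSsucc] at h1
    omega
  have hWsucc : ∀ m, W (m + 1) = π (I m) (m - S (I m) + 1) := by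
    intro m
    have h1 := hI1 m
    have h2 := hI2 m
    have hoffm := hoff m
    by_cases hcase : m + 1 < S (I m + 1)
    · have hIm : I (m + 1) = I m := by
        have hle : I (m + 1) ≤ I m := Nat.find_min' (ex (m + 1)) hcase
        have hge : I m ≤ I (m + 1) := by
          by_contra hc
          push_neg at hc
          have hmin := Nat.find_min (ex m) hc
          have := hI1 (m + 1)
          omega
        omega
      show π (I (m + 1)) (m + 1 - S (I (m + 1))) = _
      rw [hIm]
      have harith : m + 1 - S (I m) = m - S (I m) + 1 := by omega
      rw [harith]
    · have heq : m + 1 = S (I m + 1) := by omega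
      have hup : I m + 1 ≤ I (m + 1) := by
        by_contra hc
        push_neg at hc
        have hspec := hI1 (m + 1)
        have hmo : S (I (m + 1) + 1) ≤ S (I m + 1) := hSmono (by omega)
        omega
      have hSe : S (I (m + 1)) = m + 1 := by
        have ha : S (I (m + 1)) ≤ m + 1 := hI2 (m + 1)
        have hb : S (I m + 1) ≤ S (I (m + 1)) := hSmono hup
        omega
      have hu_eq : ∀ t, I m + 1 ≤ t → t ≤ I (m + 1) → u t = u (I m + 1) := by
        intro t
        induction t with
        | zero => intro h1t _; omega
        | succ t ih =>
          intro ht1 ht2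
          rcases Nat.eq_or_lt_of_le ht1 with he | hl
          · rw [← he]
          · have h1t : I m + 1 ≤ t := by omega
            have hnt : n t = 0 := by
              have hsa : S (t + 1) ≤ S (I (m + 1)) := hSmono ht2
              have hsb : S (I m + 1) ≤ S t := hSmono h1t
              rw [hSsucc] at hsa
              omega
            have hut : u (t + 1) = u t := by
              rw [← hπn t, hnt, hπ0 t]
            rw [hut]
            exact ih h1t (by omega)
      have hWm1 : W (m + 1) = u (I (m + 1)) := by
        show π (I (m + 1)) (m + 1 - S (I (m + 1))) = _
        rw [hSe, Nat.sub_self]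
        exact hπ0 _
      have hoffe : m - S (I m) + 1 = n (I m) := by
        rw [hSsucc] at heq
        omega
      rw [hWm1, hu_eq (I (m + 1)) hup le_rfl, hoffe]
      exact (hπn (I m)).symm
  have hWstep : ∀ m, norm1 (W (m + 1) - W m) = 1 := by
    intro m
    rw [hWsucc m]
    show norm1 (π (I m) (m - S (I m) + 1) - π (I m) (m - S (I m))) = 1
    exact hπstep (I m) _ (hoff m)
  have hWopen : ∀ m, ξ (W m) = true := fun m => (hπmem (I m) _ (le_of_lt (hoff m))).2
  have hWbox : ∀ m, W m ∈ box (fun j => (M : ℤ) * γt (I m + 1) j) M :=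
    fun m => (hπmem (I m) _ (le_of_lt (hoff m))).1
  have hWfin : ∀ m0, {m | W m = W m0}.Finite := by
    intro m0
    have hA : {i : ℕ | normInf (W m0 - (fun j => (M : ℤ) * γt (i + 1) j)) ≤ M}.Finite := by
      have hsub : {i : ℕ | normInf (W m0 - (fun j => (M : ℤ) * γt (i + 1) j)) ≤ M} ⊆
          (fun i => γt (i + 1)) ⁻¹' {p : Fin d → ℤ | normInf (p - 0) ≤ 1 + normInf (W m0)} := by
        intro i hi
        show normInf (γt (i + 1) - 0) ≤ 1 + normInf (W m0)
        rw [sub_zero]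
        refine normInf_le fun j => ?_
        have hc : ((W m0 - (fun j => (M : ℤ) * γt (i + 1) j)) j).natAbs ≤ M :=
          le_trans (natAbs_coord_le_normInf _ j) hi
        have hc' : (W m0 j - (M : ℤ) * γt (i + 1) j).natAbs ≤ M := hc
        have h3 : ((M : ℤ) * γt (i + 1) j).natAbs ≤ M + (W m0 j).natAbs := by omega
        rw [Int.natAbs_mul, Int.natAbs_natCast] at h3
        have h4 : (W m0 j).natAbs ≤ normInf (W m0) := natAbs_coord_le_normInf (W m0) j
        have h5 : M * (γt (i + 1) j).natAbs ≤ M * (1 + normInf (W m0)) := by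
          have h6 : normInf (W m0) ≤ M * normInf (W m0) := Nat.le_mul_of_pos_left _ (by omega)
          calc M * (γt (i + 1) j).natAbs ≤ M + (W m0 j).natAbs := h3
            _ ≤ M * (1 + normInf (W m0)) := by
                rw [Nat.mul_add, Nat.mul_one]
                omega
        exact Nat.le_of_mul_le_mul_left h5 (by omega)
      exact ((finite_box (0 : Fin d → ℤ) (1 + normInf (W m0))).preimage
        ((hinj.comp Nat.succ_injective)).injOn).subset hsub
    obtain ⟨N, hN⟩ := hA.bddAbove
    refine (Set.finite_lt_nat (S (N + 1))).subset ?_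
    intro m hm
    show m < S (N + 1)
    have hm' : W m = W m0 := hm
    have hmem : normInf (W m0 - (fun j => (M : ℤ) * γt (I m + 1) j)) ≤ M := by
      rw [← hm']
      exact hWbox m
    have hIA : I m ≤ N := hN hmem
    exact lt_of_lt_of_le (hI1 m) (hSmono (by omega))
  exact perc_of_walk ξ W hWstep hWopen hWfin
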